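/- arXiv:2211.15239 — 2 statements merged into one kernel-verified Lean document; each statement's English description precedes it below -/
import Mathlib

section
/- Let (β,α) ∈ Δ. If Ω_{β,α} is a subshift of finite type, then T_{β,α} has matching. -/
noncomputable section

/-- The upper intermediate β-transformation `T⁺_{β,α}` on `[0,1]`. -/
def Tpos (β α : ℝ) (x : ℝ) : ℝ :=
  if x = (1 - α) / β then 0 else Int.fract (β * x + α)

/-- The lower intermediate β-transformation `T⁻_{β,α}` on `[0,1]`. -/
def Tneg (β α : ℝ) (x : ℝ) : ℝ :=
  if x = (1 - α) / β then 1 else Int.fract (β * x + α)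

/-- The itinerary `τ⁺_{β,α}(x)`: index `n` (from 0) is the `(n+1)`-st entry;
entry is `false` (i.e. 0) iff the `n`-th iterate is `< c`. -/
def tauPos (β α x : ℝ) : ℕ → Bool :=
  fun n => if (Tpos β α)^[n] x < (1 - α) / β then false else true

/-- The itinerary `τ⁻_{β,α}(x)`: entry is `false` (i.e. 0) iff the iterate is `≤ c`. -/
def tauNeg (β α x : ℝ) : ℕ → Bool :=
  fun n => if (Tneg β α)^[n] x ≤ (1 - α) / β then false else true

/-- The kneading invariant `k₊` of `(β,α)`. -/
def kPlus (β α : ℝ) : ℕ → Bool := tauPos β α ((1 - α) / β)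

/-- The kneading invariant `k₋` of `(β,α)`. -/
def kMinus (β α : ℝ) : ℕ → Bool := tauNeg β α ((1 - α) / β)

/-- The kneading space `Ω_{β,α}`. -/
def OmegaSet (β α : ℝ) : Set (ℕ → Bool) :=
  (tauPos β α '' Set.Icc 0 1) ∪ (tauNeg β α '' Set.Icc 0 1)

/-- `Ω` is a subshift of finite type: there is a finite set of finite forbidden words
such that `Ω` is exactly the set of sequences avoiding them. -/
def IsSFT (Ω : Set (ℕ → Bool)) : Prop :=
  ∃ F : Finset (List Bool),
    Ω = {ω | ∀ m n : ℕ, List.ofFn (fun i : Fin n => ω (m + i)) ∉ F}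

/-- `T_{β,α}` has matching. -/
def HasMatching (β α : ℝ) : Prop :=
  ∃ n : ℕ, (Tpos β α)^[n] 0 = (Tneg β α)^[n] 1

/-- The matching time: the smallest `n` with `(T⁺)ⁿ(0) = (T⁻)ⁿ(1)`. -/
def matchingTime (β α : ℝ) : ℕ :=
  sInf {n : ℕ | (Tpos β α)^[n] 0 = (Tneg β α)^[n] 1}

/-- `T_{β,α}` and `T_{β,α'}` have the same matching: both have matching, with the same
matching time `n`, and their kneading invariants agree in the first `n+1` entries. -/
def SameMatching (β α α' : ℝ) : Prop :=
  HasMatching β α ∧ HasMatching β α' ∧ matchingTime β α = matchingTime β α' ∧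
    ∀ i ≤ matchingTime β α, kPlus β α i = kPlus β α' i ∧ kMinus β α i = kMinus β α' i

/-- The matching set `I(β,α)` (a subset of `(0, 2-β)`). -/
def matchInterval (β α : ℝ) : Set ℝ :=
  {α' | α' ∈ Set.Ioo (0 : ℝ) (2 - β) ∧ SameMatching β α α'}

/-- The parameter region `Δ`. -/
def DeltaSet : Set (ℝ × ℝ) :=
  {p | p.1 ∈ Set.Ioo (1 : ℝ) 2 ∧ p.2 ∈ Set.Ioo (0 : ℝ) (2 - p.1)}

/-- A sequence in `{0,1}^ℕ` is periodic. -/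
def IsPeriodicSeq (ω : ℕ → Bool) : Prop :=
  ∃ p : ℕ, 1 ≤ p ∧ ∀ n, ω (n + p) = ω n

/-- A sequence in `{0,1}^ℕ` is eventually periodic. -/
def IsEvPeriodicSeq (ω : ℕ → Bool) : Prop :=
  ∃ k : ℕ, IsPeriodicSeq (fun n => ω (n + k))

/-- Strict lexicographic order on `{0,1}^ℕ`: at the first index where they differ,
`ω` has entry 0 and `ν` has entry 1. -/
def lexLt (ω ν : ℕ → Bool) : Prop :=
  ∃ n : ℕ, (∀ m < n, ω m = ν m) ∧ ω n = false ∧ ν n = true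


/-!
If the `T⁺`-orbit of `0` never met `c`, every map `T⁺ⁱ` would be continuous from the left and
locally affine (slope `βⁱ`) at `T⁺0 = α`. So for `s` slightly left of `α`, the sequence
`k₊ 0, k₊ 1, τ⁺(s) = 1, 0, τ⁺(s)` agrees with `k₊ = 1, 0, τ⁺(α)` on a prefix longer than every
forbidden word; a subshift of finite type then contains it. It is the itinerary of a unique
point `z`, and comparing with `k₊ = τ⁺(c)` along the common prefix gives `z < c`, while its
first digit `1` forces `z ≥ c`. Hence `(T⁺)ᵐ 0 = c` for some `m`, and the symmetry `x ↦ 1 - x`,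
which conjugates `T⁻_{β,α}` to `T⁺_{β,2-β-α}` and complements itineraries, gives
`(T⁻)ˡ 1 = c`. As `T⁺ c = 0` and `T⁻ c = 1`, the point `c` is periodic for both maps, and both
orbits sit at `c` at time `(m+1)(l+1) - 1`.
-/

open Set Filter Topology Function

section SubshiftOfFiniteType

def avoiding (F : Finset (List Bool)) : Set (ℕ → Bool) :=
  {ω | ∀ m n : ℕ, List.ofFn (fun i : Fin n => ω (m + i)) ∉ F}

def splice (p : ℕ) (ω ω' : ℕ → Bool) : ℕ → Bool :=
  fun k => if k < p then ω k else ω' (k - p)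

variable {F : Finset (List Bool)} {ω ω' : ℕ → Bool} {p L : ℕ}

@[simp] theorem splice_add (k : ℕ) : splice p ω ω' (k + p) = ω' k := by
  simp [splice]

theorem splice_eq_of_lt (h : ∀ k < L, ω' k = ω (k + p)) {k : ℕ} (hk : k < p + L) :
    splice p ω ω' k = ω k := by
  unfold splice
  split_ifs with hkp
  · rfl
  · rw [h (k - p) (by omega), Nat.sub_add_cancel (by omega)]

/-- A window of the splice lies in `ω'`, or in the part where it copies `ω`, or is longer than
every forbidden word. -/
theorem splice_mem_avoiding (hω : ω ∈ avoiding F) (hω' : ω' ∈ avoiding F)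
    (h : ∀ k < F.sup List.length, ω' k = ω (k + p)) : splice p ω ω' ∈ avoiding F := by
  intro m n hmem
  by_cases hpm : p ≤ m
  · refine hω' (m - p) n ?_
    convert hmem using 3 with i
    simp only [splice, if_neg (show ¬m + (i : ℕ) < p by omega)]
    congr 1
    omega
  by_cases hlen : m + n ≤ p + F.sup List.length
  · refine hω m n ?_
    convert hmem using 3 with i
    exact (splice_eq_of_lt h (by omega)).symm
  · have := Finset.le_sup (f := List.length) hmem
    simp only [List.length_ofFn] at this
    omega

theorem IsSFT.setOf_compl_mem {Ω : Set (ℕ → Bool)} (hΩ : IsSFT Ω) : IsSFT {ω | ωᶜ ∈ Ω} := by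
  obtain ⟨F, rfl⟩ := hΩ
  refine ⟨F.image (List.map not), ?_⟩
  ext ω
  simp only [mem_ofPred_eq, Finset.mem_image, not_exists, not_and]
  constructor
  · intro h m n w hw hwω
    have hw' : w = List.ofFn fun i : Fin n => ωᶜ (m + i) := by
      rw [← Bool.involutive_not.list_map w, hwω, List.map_ofFn]
      rfl
    exact h m n (hw' ▸ hw)
  · intro h m n hw
    exact h m n _ hw (by simp [List.map_ofFn, Function.comp_def])

end SubshiftOfFiniteType

/-- `T` maps `[0,1]` to itself and acts there as `x ↦ βx + α - d x`, with digit `d x ∈ {0,1}`. -/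
def IsBetaMap (β α : ℝ) (T : ℝ → ℝ) (d : ℝ → Bool) : Prop :=
  ∀ x ∈ Icc (0 : ℝ) 1, T x ∈ Icc (0 : ℝ) 1 ∧ T x = β * x + α - (d x).toNat

namespace IsBetaMap

variable {β α : ℝ} {T T' : ℝ → ℝ} {d d' : ℝ → Bool} {x y : ℝ}

theorem iterate_mem (hT : IsBetaMap β α T d) (hx : x ∈ Icc (0 : ℝ) 1) (n : ℕ) :
    T^[n] x ∈ Icc (0 : ℝ) 1 :=
  MapsTo.iterate (fun x hx => (hT x hx).1) n hx

theorem iterate_sub (hT : IsBetaMap β α T d) (hT' : IsBetaMap β α T' d')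
    (hx : x ∈ Icc (0 : ℝ) 1) (hy : y ∈ Icc (0 : ℝ) 1) {n : ℕ}
    (h : ∀ j < n, d (T^[j] x) = d' (T'^[j] y)) :
    T^[n] x - T'^[n] y = β ^ n * (x - y) := by
  induction n with
  | zero => simp
  | succ n ih =>
    rw [iterate_succ_apply', iterate_succ_apply', (hT _ (hT.iterate_mem hx n)).2,
      (hT' _ (hT'.iterate_mem hy n)).2, h n n.lt_succ_self, pow_succ]
    linear_combination β * ih fun j hj => h j (hj.trans n.lt_succ_self)

theorem iterate_lt_iterate_iff (hβ : 0 < β) (hT : IsBetaMap β α T d)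
    (hT' : IsBetaMap β α T' d') (hx : x ∈ Icc (0 : ℝ) 1) (hy : y ∈ Icc (0 : ℝ) 1) {n : ℕ}
    (h : ∀ j < n, d (T^[j] x) = d' (T'^[j] y)) :
    T^[n] x < T'^[n] y ↔ x < y := by
  rw [← sub_neg, hT.iterate_sub hT' hx hy h, ← sub_neg (a := x)]
  exact ⟨fun h => neg_of_mul_neg_right h (pow_pos hβ n).le,
    mul_neg_of_pos_of_neg (pow_pos hβ n)⟩

/-- Distinct points are pulled apart by the expansion, while their orbits stay in `[0,1]`. -/
theorem eq_of_digits_eq (hβ : 1 < β) (hT : IsBetaMap β α T d) (hT' : IsBetaMap β α T' d')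
    (hx : x ∈ Icc (0 : ℝ) 1) (hy : y ∈ Icc (0 : ℝ) 1) (h : ∀ n, d (T^[n] x) = d' (T'^[n] y)) :
    x = y := by
  by_contra hxy
  have hgrow := (tendsto_pow_atTop_atTop_of_one_lt hβ).atTop_mul_const
    (abs_pos.2 (sub_ne_zero.2 hxy))
  obtain ⟨n, hn⟩ := (hgrow.eventually_gt_atTop 1).exists
  have hbound : |T^[n] x - T'^[n] y| ≤ 1 := by
    obtain ⟨⟨h0, h1⟩, ⟨h0', h1'⟩⟩ := And.intro (hT.iterate_mem hx n) (hT'.iterate_mem hy n)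
    exact abs_sub_le_of_nonneg_of_le h0 h1 h0' h1'
  rw [hT.iterate_sub hT' hx hy fun j _ => h j, abs_mul,
    abs_of_pos (pow_pos (by linarith) n)] at hbound
  linarith

theorem le_of_digit_eq_true (hβ : 0 < β) (hT : IsBetaMap β α T d) (hx : x ∈ Icc (0 : ℝ) 1)
    (hd : d x = true) : (1 - α) / β ≤ x := by
  have := (hT x hx).1.1
  rw [(hT x hx).2, hd] at this
  rw [Bool.toNat_true, Nat.cast_one] at this
  rw [div_le_iff₀' hβ]
  linarith

end IsBetaMap

section IntermediateBetaTransformation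

variable {β α x : ℝ}

theorem Tpos_c : Tpos β α ((1 - α) / β) = 0 := if_pos rfl

theorem Tneg_c : Tneg β α ((1 - α) / β) = 1 := if_pos rfl

theorem c_mem_Ioo (hβ : 1 < β) (hα : 0 < α) (hαβ : α < 2 - β) :
    (1 - α) / β ∈ Ioo (0 : ℝ) 1 := by
  constructor
  · exact div_pos (by linarith) (by linarith)
  · rw [div_lt_one (by linarith)]
    linarith

theorem fract_mul_add_eq (hβ : 1 < β) (hα : 0 < α) (hαβ : α < 2 - β)
    (hx : x ∈ Icc (0 : ℝ) 1) :
    Int.fract (β * x + α) = β * x + α - if x < (1 - α) / β then 0 else 1 := by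
  split_ifs with hxc
  · have : β * x < 1 - α := by rwa [lt_div_iff₀' (by linarith)] at hxc
    rw [sub_zero, Int.fract_eq_self]
    constructor <;> nlinarith [hx.1]
  · have : 1 - α ≤ β * x := by rwa [not_lt, div_le_iff₀' (by linarith)] at hxc
    exact Int.fract_eq_iff.2 ⟨by linarith, by nlinarith [hx.2], 1, by norm_num⟩

theorem Tpos_mem_Icc (x : ℝ) : Tpos β α x ∈ Icc (0 : ℝ) 1 := by
  unfold Tpos
  split_ifs
  · simp
  · exact ⟨Int.fract_nonneg _, (Int.fract_lt_one _).le⟩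

theorem Tneg_mem_Icc (x : ℝ) : Tneg β α x ∈ Icc (0 : ℝ) 1 := by
  unfold Tneg
  split_ifs
  · simp
  · exact ⟨Int.fract_nonneg _, (Int.fract_lt_one _).le⟩

theorem isBetaMap_Tpos (hβ : 1 < β) (hα : 0 < α) (hαβ : α < 2 - β) :
    IsBetaMap β α (Tpos β α) (fun x => tauPos β α x 0) := by
  refine fun x hx => ⟨Tpos_mem_Icc x, ?_⟩
  by_cases hxc : x = (1 - α) / β
  · subst hxc
    simp only [Tpos_c, tauPos, iterate_zero, id, lt_irrefl, if_false]
    field_simp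
    norm_num
  · rw [Tpos, if_neg hxc, fract_mul_add_eq hβ hα hαβ hx]
    by_cases h : x < (1 - α) / β <;> simp [tauPos, h]

theorem isBetaMap_Tneg (hβ : 1 < β) (hα : 0 < α) (hαβ : α < 2 - β) :
    IsBetaMap β α (Tneg β α) (fun x => tauNeg β α x 0) := by
  refine fun x hx => ⟨Tneg_mem_Icc x, ?_⟩
  by_cases hxc : x = (1 - α) / β
  · subst hxc
    simp only [Tneg_c, tauNeg, iterate_zero, id, le_refl, if_true]
    field_simp
    norm_num
  · rw [Tneg, if_neg hxc, fract_mul_add_eq hβ hα hαβ hx]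
    by_cases h : x < (1 - α) / β <;> simp [tauNeg, le_iff_lt_or_eq, hxc, h]

theorem Tpos_pos (hβ : 1 < β) (hα : 0 < α) (hαβ : α < 2 - β) (hx : x ∈ Icc (0 : ℝ) 1)
    (hxc : x ≠ (1 - α) / β) : 0 < Tpos β α x := by
  rw [((isBetaMap_Tpos hβ hα hαβ) x hx).2]
  by_cases h : x < (1 - α) / β
  · simp only [tauPos, iterate_zero, id, h, if_true, Bool.toNat_false, Nat.cast_zero, sub_zero]
    nlinarith [hx.1]
  · have hcx : (1 - α) / β < x := lt_of_le_of_ne (not_lt.1 h) (Ne.symm hxc)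
    have : 1 - α < β * x := by rwa [div_lt_iff₀' (by linarith)] at hcx
    simp only [tauPos, iterate_zero, id, h, if_false, Bool.toNat_true, Nat.cast_one]
    linarith

theorem eventually_tauPos_zero_eq (hxc : x ≠ (1 - α) / β) :
    ∀ᶠ s in 𝓝 x, tauPos β α s 0 = tauPos β α x 0 := by
  rcases hxc.lt_or_gt with hxc | hxc
  · filter_upwards [eventually_lt_nhds hxc] with s hs
    simp [tauPos, hs, hxc]
  · filter_upwards [eventually_gt_nhds hxc] with s hs
    simp [tauPos, not_lt.2 hs.le, not_lt.2 hxc.le]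

/-- Away from `c`, `T⁺` is affine with positive slope, so it respects left neighbourhoods. -/
theorem tendsto_Tpos_nhdsLE (hβ : 1 < β) (hα : 0 < α) (hαβ : α < 2 - β)
    (hx : x ∈ Ioc (0 : ℝ) 1) (hxc : x ≠ (1 - α) / β) :
    Tendsto (Tpos β α) (𝓝[≤] x) (𝓝[≤] (Tpos β α x)) := by
  have hT := isBetaMap_Tpos hβ hα hαβ
  have hlocal : (fun s => Tpos β α x + β * (s - x)) =ᶠ[𝓝[≤] x] Tpos β α := by
    filter_upwards [nhdsWithin_le_nhds (eventually_tauPos_zero_eq hxc),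
      nhdsWithin_le_nhds (eventually_gt_nhds hx.1), self_mem_nhdsWithin] with s hs hs0 hsx
    rw [(hT s ⟨hs0.le, hsx.trans hx.2⟩).2, (hT x (Ioc_subset_Icc_self hx)).2]
    dsimp only
    rw [hs]
    ring
  refine Tendsto.congr' hlocal ?_
  have hcont : ContinuousWithinAt (fun s => Tpos β α x + β * (s - x)) (Iic x) x := by fun_prop
  simpa using hcont.tendsto_nhdsWithin fun s (hs : s ≤ x) => by
    simp only [mem_Iic]; nlinarith

theorem iterate_Tpos_mem_Ioc (hβ : 1 < β) (hα : 0 < α) (hαβ : α < 2 - β)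
    (hx : x ∈ Ioc (0 : ℝ) 1) (hxc : ∀ j, (Tpos β α)^[j] x ≠ (1 - α) / β) (n : ℕ) :
    (Tpos β α)^[n] x ∈ Ioc (0 : ℝ) 1 := by
  induction n with
  | zero => exact hx
  | succ n ih =>
    rw [iterate_succ_apply']
    exact ⟨Tpos_pos hβ hα hαβ (Ioc_subset_Icc_self ih) (hxc n),
      (Tpos_mem_Icc _).2⟩

theorem tendsto_iterate_Tpos_nhdsLE (hβ : 1 < β) (hα : 0 < α) (hαβ : α < 2 - β)
    (hx : x ∈ Ioc (0 : ℝ) 1) (hxc : ∀ j, (Tpos β α)^[j] x ≠ (1 - α) / β) (n : ℕ) :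
    Tendsto (Tpos β α)^[n] (𝓝[≤] x) (𝓝[≤] ((Tpos β α)^[n] x)) := by
  induction n with
  | zero => exact tendsto_id
  | succ n ih =>
    rw [iterate_succ']
    exact (tendsto_Tpos_nhdsLE hβ hα hαβ (iterate_Tpos_mem_Ioc hβ hα hαβ hx hxc n)
      (hxc n)).comp ih

theorem exists_lt_tauPos_eq (hβ : 1 < β) (hα : 0 < α) (hαβ : α < 2 - β)
    (hx : x ∈ Ioc (0 : ℝ) 1) (hxc : ∀ j, (Tpos β α)^[j] x ≠ (1 - α) / β) (L : ℕ) :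
    ∃ s ∈ Ioo 0 x, ∀ k < L, tauPos β α s k = tauPos β α x k := by
  have hdigits : ∀ᶠ s in 𝓝[≤] x, ∀ k ∈ Finset.range L, tauPos β α s k = tauPos β α x k := by
    rw [eventually_all_finset]
    intro k _
    exact ((tendsto_iterate_Tpos_nhdsLE hβ hα hαβ hx hxc k).mono_right
      nhdsWithin_le_nhds).eventually (eventually_tauPos_zero_eq (hxc k))
  have hleft : ∀ᶠ s in 𝓝[<] x,
      (∀ k ∈ Finset.range L, tauPos β α s k = tauPos β α x k) ∧ s < x ∧ 0 < s :=
    (hdigits.filter_mono (nhdsWithin_mono x Iio_subset_Iic_self)).and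
      (eventually_mem_nhdsWithin.and (nhdsWithin_le_nhds (eventually_gt_nhds hx.1)))
  obtain ⟨s, hs, hsx, hs0⟩ := hleft.exists
  exact ⟨s, ⟨hs0, hsx⟩, fun k hk => hs k (Finset.mem_range.2 hk)⟩

end IntermediateBetaTransformation

section Kneading

variable {β α : ℝ}

theorem exists_isBetaMap_of_mem_OmegaSet (hβ : 1 < β) (hα : 0 < α) (hαβ : α < 2 - β)
    {ω : ℕ → Bool} (hω : ω ∈ OmegaSet β α) :
    ∃ T d, IsBetaMap β α T d ∧ ∃ z ∈ Icc (0 : ℝ) 1, ∀ n, ω n = d (T^[n] z) := by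
  rcases hω with ⟨z, hz, rfl⟩ | ⟨z, hz, rfl⟩
  exacts [⟨_, _, isBetaMap_Tpos hβ hα hαβ, z, hz, fun _ => rfl⟩,
    ⟨_, _, isBetaMap_Tneg hβ hα hαβ, z, hz, fun _ => rfl⟩]

theorem kPlus_zero : kPlus β α 0 = true := by
  simp [kPlus, tauPos]

theorem kPlus_add_two (k : ℕ) : kPlus β α (k + 2) = tauPos β α (Tpos β α 0) k := by
  simp only [kPlus, tauPos]
  rw [iterate_add_apply, iterate_succ_apply, iterate_one, Tpos_c]

/-- Such a sequence would be the itinerary of a point `z` with first digit `1`, so `c ≤ z`,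
whereas expanding along the common prefix with `k₊ = τ⁺(c)` gives `z < c`. -/
theorem notMem_OmegaSet_of_kPlus_prefix (hβ : 1 < β) (hα : 0 < α) (hαβ : α < 2 - β)
    {ν : ℕ → Bool} {N : ℕ} (hN : 0 < N) (hprefix : ∀ j < N, ν j = kPlus β α j)
    {y : ℝ} (hy : y ∈ Icc (0 : ℝ) 1) (htail : ∀ n, ν (n + N) = tauPos β α y n)
    (hlt : y < (Tpos β α)^[N] ((1 - α) / β)) : ν ∉ OmegaSet β α := by
  intro hν
  have hT := isBetaMap_Tpos hβ hα hαβ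
  obtain ⟨T, d, hTd, z, hz, hzν⟩ := exists_isBetaMap_of_mem_OmegaSet hβ hα hαβ hν
  have hcz : (1 - α) / β ≤ z := hTd.le_of_digit_eq_true (by linarith) hz <| by
    rw [← iterate_zero_apply T z, ← hzν 0, hprefix 0 hN, kPlus_zero]
  have hTz : T^[N] z = y :=
    hTd.eq_of_digits_eq hβ hT (hTd.iterate_mem hz N) hy fun n => by
      rw [← iterate_add_apply, ← hzν, htail]
      rfl
  have hzc : z < (1 - α) / β := by
    refine (hTd.iterate_lt_iterate_iff (by linarith) hT hz
      (Ioo_subset_Icc_self (c_mem_Ioo hβ hα hαβ)) fun j hj => ?_).1 (hTz ▸ hlt)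
    rw [← hzν, hprefix j hj]
    rfl
  linarith

theorem exists_iterate_Tpos_zero_eq_c (hβ : 1 < β) (hα : 0 < α) (hαβ : α < 2 - β)
    (hSFT : IsSFT (OmegaSet β α)) : ∃ m, (Tpos β α)^[m] 0 = (1 - α) / β := by
  by_contra! h0c
  obtain ⟨F, hF⟩ := hSFT
  set L := F.sup List.length
  have hT := isBetaMap_Tpos hβ hα hαβ
  have hx₁ : Tpos β α 0 ∈ Ioc (0 : ℝ) 1 :=
    ⟨Tpos_pos hβ hα hαβ (by simp) (h0c 0), (Tpos_mem_Icc 0).2⟩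
  obtain ⟨s, ⟨hs0, hsx⟩, hdigits⟩ :=
    exists_lt_tauPos_eq hβ hα hαβ hx₁ (fun j => h0c (j + 1)) L
  have hsI : s ∈ Icc (0 : ℝ) 1 := ⟨hs0.le, hsx.le.trans hx₁.2⟩
  have hagree : ∀ k < L, tauPos β α s k = kPlus β α (k + 2) := fun k hk =>
    (hdigits k hk).trans (kPlus_add_two k).symm
  have hν : splice 2 (kPlus β α) (tauPos β α s) ∈ OmegaSet β α := by
    have hk : kPlus β α ∈ OmegaSet β α :=
      Or.inl ⟨_, Ioo_subset_Icc_self (c_mem_Ioo hβ hα hαβ), rfl⟩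
    have hs : tauPos β α s ∈ OmegaSet β α := Or.inl ⟨s, hsI, rfl⟩
    rw [hF] at hk hs ⊢
    exact splice_mem_avoiding hk hs hagree
  refine notMem_OmegaSet_of_kPlus_prefix hβ hα hαβ (N := L + 2) (by omega)
    (fun j hj => splice_eq_of_lt hagree (by omega)) (hT.iterate_mem hsI L) (fun n => ?_) ?_ hν
  · rw [← add_assoc, splice_add]
    simp only [tauPos, iterate_add_apply]
  · rw [iterate_add_apply, iterate_succ_apply, iterate_one, Tpos_c]
    exact (hT.iterate_lt_iterate_iff (by linarith) hT hsI (Ioc_subset_Icc_self hx₁)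
      fun j hj => hdigits j hj).2 hsx

end Kneading

section Symmetry

variable {β α α' x : ℝ}

theorem tauNeg_one_sub_zero (hβ : 0 < β) (hαα' : α + α' = 2 - β) (x : ℝ) :
    tauNeg β α (1 - x) 0 = !tauPos β α' x 0 := by
  have key : 1 - x ≤ (1 - α) / β ↔ ¬x < (1 - α') / β := by
    rw [not_lt, le_div_iff₀' hβ, div_le_iff₀' hβ]
    constructor <;> intro <;> linarith
  by_cases h : x < (1 - α') / β <;> simp [tauNeg, tauPos, h, key]

theorem Tneg_one_sub (hβ : 1 < β) (hα : 0 < α) (hαβ : α < 2 - β) (hαα' : α + α' = 2 - β)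
    (hx : x ∈ Icc (0 : ℝ) 1) : Tneg β α (1 - x) = 1 - Tpos β α' x := by
  rw [((isBetaMap_Tneg hβ hα hαβ) _ (Icc.one_sub_mem hx)).2,
    ((isBetaMap_Tpos hβ (by linarith) (by linarith)) x hx).2]
  dsimp only
  rw [tauNeg_one_sub_zero (by linarith) hαα']
  cases tauPos β α' x 0 <;>
    simp only [Bool.not_false, Bool.not_true, Bool.toNat_true, Bool.toNat_false,
      Nat.cast_one, Nat.cast_zero] <;> linarith

theorem iterate_Tneg_one_sub (hβ : 1 < β) (hα : 0 < α) (hαβ : α < 2 - β)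
    (hαα' : α + α' = 2 - β) (hx : x ∈ Icc (0 : ℝ) 1) (n : ℕ) :
    (Tneg β α)^[n] (1 - x) = 1 - (Tpos β α')^[n] x := by
  induction n with
  | zero => rfl
  | succ n ih =>
    rw [iterate_succ_apply', iterate_succ_apply', ih, Tneg_one_sub hβ hα hαβ hαα'
      ((isBetaMap_Tpos hβ (by linarith) (by linarith)).iterate_mem hx n)]

theorem tauNeg_one_sub (hβ : 1 < β) (hα : 0 < α) (hαβ : α < 2 - β) (hαα' : α + α' = 2 - β)
    (hx : x ∈ Icc (0 : ℝ) 1) : tauNeg β α (1 - x) = (tauPos β α' x)ᶜ := by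
  funext n
  show tauNeg β α ((Tneg β α)^[n] (1 - x)) 0 = !tauPos β α' ((Tpos β α')^[n] x) 0
  rw [iterate_Tneg_one_sub hβ hα hαβ hαα' hx, tauNeg_one_sub_zero (by linarith) hαα']

theorem compl_mem_OmegaSet (hβ : 1 < β) (hα : 0 < α) (hαβ : α < 2 - β)
    (hαα' : α + α' = 2 - β) {ω : ℕ → Bool} (hω : ω ∈ OmegaSet β α) :
    ωᶜ ∈ OmegaSet β α' := by
  have hα'α : α' + α = 2 - β := by linarith
  rcases hω with ⟨x, hx, rfl⟩ | ⟨x, hx, rfl⟩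
  · exact Or.inr ⟨1 - x, Icc.one_sub_mem hx, tauNeg_one_sub hβ (by linarith) (by linarith) hα'α hx⟩
  · refine Or.inl ⟨1 - x, Icc.one_sub_mem hx, ?_⟩
    rw [← compl_compl (tauPos β α' (1 - x)), ← tauNeg_one_sub hβ hα hαβ hαα' (Icc.one_sub_mem hx),
      sub_sub_cancel]

theorem IsSFT.OmegaSet_of_add_eq (hβ : 1 < β) (hα : 0 < α) (hαβ : α < 2 - β)
    (hαα' : α + α' = 2 - β) (h : IsSFT (OmegaSet β α)) : IsSFT (OmegaSet β α') := by
  convert h.setOf_compl_mem using 1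
  ext ω
  exact ⟨compl_mem_OmegaSet hβ (by linarith) (by linarith) (by linarith),
    fun hω => compl_compl ω ▸ compl_mem_OmegaSet hβ hα hαβ hαα' hω⟩

theorem exists_iterate_Tneg_one_eq_c (hβ : 1 < β) (hα : 0 < α) (hαβ : α < 2 - β)
    (hSFT : IsSFT (OmegaSet β α)) : ∃ m, (Tneg β α)^[m] 1 = (1 - α) / β := by
  have hαα' : α + (2 - β - α) = 2 - β := by ring
  obtain ⟨m, hm⟩ := exists_iterate_Tpos_zero_eq_c hβ (by linarith) (by linarith)
    (hSFT.OmegaSet_of_add_eq hβ hα hαβ hαα')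
  have hconj := iterate_Tneg_one_sub hβ hα hαβ hαα' (x := 0) (by simp) m
  rw [sub_zero] at hconj
  refine ⟨m, ?_⟩
  rw [hconj, hm]
  field_simp
  ring

end Symmetry

theorem hasMatching_of_iterate_eq_c {β α : ℝ} {m l : ℕ}
    (hm : (Tpos β α)^[m] 0 = (1 - α) / β) (hl : (Tneg β α)^[l] 1 = (1 - α) / β) :
    HasMatching β α := by
  have hpos : IsPeriodicPt (Tpos β α) (m + 1) ((1 - α) / β) := by
    rw [IsPeriodicPt, IsFixedPt, iterate_succ_apply, Tpos_c, hm]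
  have hneg : IsPeriodicPt (Tneg β α) (l + 1) ((1 - α) / β) := by
    rw [IsPeriodicPt, IsFixedPt, iterate_succ_apply, Tneg_c, hl]
  obtain ⟨N, hN⟩ : ∃ N, (m + 1) * (l + 1) = N + 1 := ⟨m + l * (m + 1), by ring⟩
  have hposN := hpos.mul_const (l + 1)
  have hnegN := hneg.const_mul (m + 1)
  rw [hN, IsPeriodicPt, IsFixedPt, iterate_succ_apply, Tpos_c] at hposN
  rw [hN, IsPeriodicPt, IsFixedPt, iterate_succ_apply, Tneg_c] at hnegN
  exact ⟨N, hposN.trans hnegN.symm⟩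

theorem sft_implies_matching (β α : ℝ)
    (hβ : β ∈ Set.Ioo (1 : ℝ) 2) (hα : α ∈ Set.Ioo (0 : ℝ) (2 - β))
    (hSFT : IsSFT (OmegaSet β α)) : HasMatching β α := by
  obtain ⟨hβ1, -⟩ := hβ
  obtain ⟨hα0, hαβ⟩ := hα
  obtain ⟨m, hm⟩ := exists_iterate_Tpos_zero_eq_c hβ1 hα0 hαβ hSFT
  obtain ⟨l, hl⟩ := exists_iterate_Tneg_one_eq_c hβ1 hα0 hαβ hSFT
  exact hasMatching_of_iterate_eq_c hm hl
end
end

section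
/- Let v = (v₁v₂…), w = (w₁w₂…) ∈ {0,1}^ℕ with v₁ = 1, v₂ = 0, w₁ = 0, w₂ = 1, let k ≥ 2 and 1 ≤ r < k be integers, and assume: v_i = w_i for all i > k; v_i = w_{r+i} for all 1 ≤ i ≤ k−r; v_{k−r+i} = w_{k+i} for all 1 ≤ i ≤ r; and w_{k+i} = w_i for all 1 ≤ i ≤ r. Then there is no (β,α) ∈ Δ whose kneading invariants are (k₊, k₋) = (v, w). -/
noncomputable section

/-!
On `[0,1]` both `T⁺` and `T⁻` act as `x ↦ βx + α - d`, where `d ∈ {0,1}` is the current itinerary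
digit, so two orbits reading the same digits for `n` steps separate by the factor `βⁿ`. Let `f`, `g`
be the `T⁻`- and `T⁺`-orbits of `c`, with digits `w` and `v`. As `v` and `w` agree from index `k` on
and the orbits stay in `[0,1]` while `β > 1`, `f k = g k`. The period `k` of `w` on `r` digits gives
`f (k + r) - f r = βʳ (f k - c)`, and the shift `vⱼ = w (r + j)` for `j < k` gives
`f (r + k) - g k = βᵏ (f r - c)`. Hence `(βᵏ - 1)(f r - c) = (βʳ - 1)(f k - c)`; but `w r = v 0 = 1`
forces `f r > c` and `w k = w 0 = 0` forces `f k ≤ c`, so the left side is positive and the right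
side is not.
-/

open Set

namespace IntermediateBeta

variable {β α x : ℝ}

theorem Tpos_mem_Icc (β α x : ℝ) : Tpos β α x ∈ Icc 0 1 := by
  unfold Tpos
  split_ifs
  · exact ⟨le_rfl, zero_le_one⟩
  · exact ⟨Int.fract_nonneg _, (Int.fract_lt_one _).le⟩

theorem Tneg_mem_Icc (β α x : ℝ) : Tneg β α x ∈ Icc 0 1 := by
  unfold Tneg
  split_ifs
  · exact ⟨zero_le_one, le_rfl⟩
  · exact ⟨Int.fract_nonneg _, (Int.fract_lt_one _).le⟩

theorem fract_mul_add_of_lt (hβ : 0 < β) (hα : 0 ≤ α) (hx : x ∈ Icc 0 1)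
    (hxc : x < (1 - α) / β) : Int.fract (β * x + α) = β * x + α := by
  have := (lt_div_iff₀ hβ).1 hxc
  exact Int.fract_eq_self.2 ⟨by nlinarith [hx.1], by linarith⟩

theorem fract_mul_add_of_gt (hβ : 0 < β) (hβα : β + α < 2) (hx : x ∈ Icc 0 1)
    (hxc : (1 - α) / β < x) : Int.fract (β * x + α) = β * x + α - 1 := by
  have := (div_lt_iff₀ hβ).1 hxc
  exact Int.fract_eq_iff.2 ⟨by linarith, by nlinarith [hx.2], 1, by simp⟩

theorem Tpos_eq (hβ : 0 < β) (hα : 0 ≤ α) (hβα : β + α < 2) (hx : x ∈ Icc 0 1) :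
    Tpos β α x = β * x + α - (tauPos β α x 0).toNat := by
  simp only [Tpos, tauPos, Function.iterate_zero, id]
  rcases lt_trichotomy x ((1 - α) / β) with hxc | rfl | hxc
  · simp [hxc, hxc.ne, fract_mul_add_of_lt hβ hα hx hxc]
  · simp only [if_true, lt_irrefl, if_false]
    field_simp
    simp
  · simp [hxc.ne', not_lt.2 hxc.le, fract_mul_add_of_gt hβ hβα hx hxc]

theorem Tneg_eq (hβ : 0 < β) (hα : 0 ≤ α) (hβα : β + α < 2) (hx : x ∈ Icc 0 1) :
    Tneg β α x = β * x + α - (tauNeg β α x 0).toNat := by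
  simp only [Tneg, tauNeg, Function.iterate_zero, id]
  rcases lt_trichotomy x ((1 - α) / β) with hxc | rfl | hxc
  · simp [hxc.le, hxc.ne, fract_mul_add_of_lt hβ hα hx hxc]
  · simp only [if_true, le_refl]
    field_simp
    simp
  · simp [hxc.ne', not_le.2 hxc, fract_mul_add_of_gt hβ hβα hx hxc]

def IsAffineOrbit (β α : ℝ) (d : ℕ → Bool) (u : ℕ → ℝ) : Prop :=
  ∀ n, u (n + 1) = β * u n + α - (d n).toNat

theorem isAffineOrbit_Tpos (hβ : 0 < β) (hα : 0 ≤ α) (hβα : β + α < 2) (hx : x ∈ Icc 0 1) :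
    IsAffineOrbit β α (tauPos β α x) fun n ↦ (Tpos β α)^[n] x := fun n ↦ by
  beta_reduce
  rw [Function.iterate_succ_apply',
    Tpos_eq hβ hα hβα (MapsTo.iterate (fun y _ ↦ Tpos_mem_Icc β α y) n hx)]
  rfl

theorem isAffineOrbit_Tneg (hβ : 0 < β) (hα : 0 ≤ α) (hβα : β + α < 2) (hx : x ∈ Icc 0 1) :
    IsAffineOrbit β α (tauNeg β α x) fun n ↦ (Tneg β α)^[n] x := fun n ↦ by
  beta_reduce
  rw [Function.iterate_succ_apply',
    Tneg_eq hβ hα hβα (MapsTo.iterate (fun y _ ↦ Tneg_mem_Icc β α y) n hx)]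
  rfl

theorem eq_zero_of_abs_pow_mul_le (hβ : 1 < β) {t C : ℝ} (h : ∀ n : ℕ, |β ^ n * t| ≤ C) :
    t = 0 := by
  by_contra ht
  have ht' : 0 < |t| := abs_pos.2 ht
  obtain ⟨n, hn⟩ := pow_unbounded_of_one_lt (C / |t|) hβ
  have := h n
  rw [abs_mul, abs_of_pos (pow_pos (zero_lt_one.trans hβ) n)] at this
  rw [div_lt_iff₀ ht'] at hn
  linarith

section AffineOrbit

variable {u u' : ℕ → ℝ} {d d' : ℕ → Bool}

theorem IsAffineOrbit.sub_eq_pow_mul (hu : IsAffineOrbit β α d u)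
    (hu' : IsAffineOrbit β α d' u') {m m' n : ℕ} (hd : ∀ j < n, d (m + j) = d' (m' + j)) :
    u (m + n) - u' (m' + n) = β ^ n * (u m - u' m') := by
  induction n with
  | zero => simp
  | succ n ih =>
    have ih := ih fun j hj ↦ hd j (hj.trans n.lt_succ_self)
    rw [← add_assoc, ← add_assoc, hu, hu', hd n n.lt_succ_self]
    linear_combination β * ih

theorem IsAffineOrbit.eq_of_digits_eq (hβ : 1 < β) (hu : IsAffineOrbit β α d u)
    (hu' : IsAffineOrbit β α d' u') (hI : ∀ n, u n ∈ Icc 0 1) (hI' : ∀ n, u' n ∈ Icc 0 1)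
    {m : ℕ} (hd : ∀ j, d (m + j) = d' (m + j)) : u m = u' m := by
  refine sub_eq_zero.1 (eq_zero_of_abs_pow_mul_le hβ (C := 1) fun n ↦ ?_)
  rw [← hu.sub_eq_pow_mul hu' fun j _ ↦ hd j]
  exact abs_sub_le_of_nonneg_of_le (hI _).1 (hI _).2 (hI' _).1 (hI' _).2

/-- `u (k + r)` is compared with `u r` through the period `k` of the digits of `u` for `r` steps,
and with `u k = u' k` through the orbit `u'`, whose digits are those of `u` shifted by `r`. -/
theorem IsAffineOrbit.pow_sub_one_mul_eq (hβ : 1 < β) (hu : IsAffineOrbit β α d u)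
    (hu' : IsAffineOrbit β α d' u') (hI : ∀ n, u n ∈ Icc 0 1) (hI' : ∀ n, u' n ∈ Icc 0 1)
    (h0 : u 0 = u' 0) {k r : ℕ} (hmatch : ∀ j, k ≤ j → d' j = d j)
    (hshift : ∀ j < k, d' j = d (r + j)) (hper : ∀ j < r, d (k + j) = d j) :
    (β ^ k - 1) * (u r - u 0) = (β ^ r - 1) * (u k - u 0) := by
  have hk : u k = u' k := hu.eq_of_digits_eq hβ hu' hI hI' fun j ↦ (hmatch _ le_self_add).symm
  have hA := hu.sub_eq_pow_mul hu (m := k) (m' := 0) (n := r) fun j hj ↦ by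
    rw [zero_add]; exact hper j hj
  have hB := hu.sub_eq_pow_mul hu' (m := r) (m' := 0) (n := k) fun j hj ↦ by
    rw [zero_add]; exact (hshift j hj).symm
  rw [zero_add, add_comm r k] at hB
  rw [zero_add] at hA
  linear_combination hA - hB + hk - β ^ k * h0

end AffineOrbit

theorem tauNeg_eq_true_iff {n : ℕ} :
    tauNeg β α x n = true ↔ (1 - α) / β < (Tneg β α)^[n] x := by
  simp [tauNeg]

theorem tauNeg_eq_false_iff {n : ℕ} :
    tauNeg β α x n = false ↔ (Tneg β α)^[n] x ≤ (1 - α) / β := by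
  simp [tauNeg]

end IntermediateBeta

theorem forall_lt_apply_eq_apply_add_of_split {γ : Type*} {v w : ℕ → γ} {k r : ℕ}
    (hrk : r ≤ k) (hv : ∀ j < k - r, v j = w (r + j))
    (hv' : ∀ j < r, v (k - r + j) = w (k + j)) : ∀ j < k, v j = w (r + j) := by
  intro j hj
  rcases lt_or_ge j (k - r) with hj' | hj'
  · exact hv j hj'
  · obtain ⟨i, rfl⟩ : ∃ i, j = k - r + i := ⟨j - (k - r), by omega⟩
    rw [hv' i (by omega), show r + (k - r + i) = k + i by omega]

open IntermediateBeta

theorem not_linearizable_of_shift_relation_general (v w : ℕ → Bool)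
    (hv0 : v 0 = true) (hw0 : w 0 = false)
    (k r : ℕ) (hr : 1 ≤ r) (hrk : r < k)
    (h1 : ∀ j, k ≤ j → v j = w j)
    (h2 : ∀ j < k - r, v j = w (r + j))
    (h3 : ∀ j < r, v (k - r + j) = w (k + j))
    (h4 : ∀ j < r, w (k + j) = w j) :
    ¬ ∃ β α : ℝ, β ∈ Set.Ioo (1 : ℝ) 2 ∧ α ∈ Set.Ioo (0 : ℝ) (2 - β) ∧
      kPlus β α = v ∧ kMinus β α = w := by
  rintro ⟨β, α, ⟨hβ, -⟩, ⟨hα, hβα⟩, hkp, hkm⟩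
  set c := (1 - α) / β
  have hc : c ∈ Icc 0 1 :=
    ⟨div_nonneg (by linarith) (by linarith), (div_le_one (by linarith)).2 (by linarith)⟩
  set f : ℕ → ℝ := fun n ↦ (Tneg β α)^[n] c
  have hf : IsAffineOrbit β α w f := hkm ▸ isAffineOrbit_Tneg (by linarith) hα.le (by linarith) hc
  have hg : IsAffineOrbit β α v fun n ↦ (Tpos β α)^[n] c :=
    hkp ▸ isAffineOrbit_Tpos (by linarith) hα.le (by linarith) hc
  have key : (β ^ k - 1) * (f r - c) = (β ^ r - 1) * (f k - c) :=
    hf.pow_sub_one_mul_eq hβ hg (fun n ↦ MapsTo.iterate (fun y _ ↦ Tneg_mem_Icc β α y) n hc)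
      (fun n ↦ MapsTo.iterate (fun y _ ↦ Tpos_mem_Icc β α y) n hc) rfl h1
      (forall_lt_apply_eq_apply_add_of_split hrk.le h2 h3) h4
  have hfr : c < f r := tauNeg_eq_true_iff.1 <| show kMinus β α r = true by
    rw [hkm]; simpa [hv0] using (h2 0 (by omega)).symm
  have hfk : f k ≤ c := tauNeg_eq_false_iff.1 <| show kMinus β α k = false by
    rw [hkm]; simpa [hw0] using h4 0 hr
  have hpos := mul_pos (sub_pos.2 (one_lt_pow₀ hβ (by omega : k ≠ 0))) (sub_pos.2 hfr)
  have hnonpos := mul_nonpos_of_nonneg_of_nonpos (sub_nonneg.2 (one_le_pow₀ hβ.le (n := r)))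
    (sub_nonpos.2 hfk)
  linarith

theorem not_linearizable_of_shift_relation (v w : ℕ → Bool)
    (hv0 : v 0 = true) (hv1 : v 1 = false) (hw0 : w 0 = false) (hw1 : w 1 = true)
    (k r : ℕ) (hk : 2 ≤ k) (hr : 1 ≤ r) (hrk : r < k)
    (h1 : ∀ j, k ≤ j → v j = w j)
    (h2 : ∀ j < k - r, v j = w (r + j))
    (h3 : ∀ j < r, v (k - r + j) = w (k + j))
    (h4 : ∀ j < r, w (k + j) = w j) :
    ¬ ∃ β α : ℝ, β ∈ Set.Ioo (1 : ℝ) 2 ∧ α ∈ Set.Ioo (0 : ℝ) (2 - β) ∧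
      kPlus β α = v ∧ kMinus β α = w :=
  not_linearizable_of_shift_relation_general v w hv0 hw0 k r hr hrk h1 h2 h3 h4
end
end
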